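/- Let C > 1 and ε = min{C−1, 1/3}. There exist Δ₀ = Δ₀(ε) and ℓ₀ = ℓ₀(ε) such that for every integer Δ > Δ₀, every integer k > CΔ/ln Δ, every ℓ > ℓ₀, and any two distinct colors c₁, c₂ ∈ [k], there exists a coupling ν of μ^↓_{c₁,ℓ} and μ^↓_{c₂,ℓ} such that the probability over (X,Y) drawn from ν that H_ℓ(X,Y) > Δ^{εℓ/8} is at most e^{−Δ^{εℓ/10}}. -/

import Mathlib

/-!
Kempe coupling. Draw `σ` uniformly among the proper colorings with root color `c₁` and swap `c₁`
and `c₂` on the `{c₁, c₂}`-component of the root. This is a bijection onto the proper colorings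
with root color `c₂`, so the two leaf colorings form a coupling, and they differ exactly at the
leaves of that component; let `Z` be their number.

The component is a branching process: each of the `Δ` children of a chain vertex continues the
chain with probability `1 / (k - 1)`. Counting colorings by root color, the exponential moments
`G_h = ∑ exp (t Z)` satisfy `G_{h+1} = (G_h + (k - 2) N_h) ^ Δ`, where `N_h` is the number of
colorings with a given root color, and induction gives `E[exp (t Z)] ≤ exp (t r^ℓ)` for
`r = 2Δ / (k - 1) + 1` and `t r^ℓ ≤ 1`. When `k > Δ / log Δ`, `r = O(log Δ) ≤ Δ^(ε/80)`, and the
Chernoff bound with `t = r^(-ℓ)` gives the tail estimate.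
-/

/-- Vertices of the complete rooted tree of depth `ℓ` and branching factor `Δ`:
a vertex is the path leading to it from the root, i.e. a pair of a depth `i ≤ ℓ`
and a function `Fin i → Fin Δ`. -/
abbrev TVertex (Δ ℓ : ℕ) : Type := Σ i : Fin (ℓ + 1), Fin i.val → Fin Δ

/-- The root of the tree. -/
def troot (Δ ℓ : ℕ) : TVertex Δ ℓ := ⟨⟨0, Nat.succ_pos ℓ⟩, fun i => i.elim0⟩

/-- The `j`-th child of a vertex `v` of depth `< ℓ`. -/
def tchild {Δ ℓ : ℕ} (v : TVertex Δ ℓ) (h : v.1.val < ℓ) (j : Fin Δ) : TVertex Δ ℓ :=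
  ⟨⟨v.1.val + 1, Nat.succ_lt_succ h⟩, Fin.snoc v.2 j⟩

/-- A proper `k`-coloring of the tree: adjacent (parent/child) vertices get distinct colors. -/
def ProperColoring (Δ ℓ k : ℕ) (σ : TVertex Δ ℓ → Fin k) : Prop :=
  ∀ (v : TVertex Δ ℓ) (h : v.1.val < ℓ) (j : Fin Δ), σ v ≠ σ (tchild v h j)

/-- The leaf determined by a root-to-leaf path. -/
def leafVertex {Δ ℓ : ℕ} (f : Fin ℓ → Fin Δ) : TVertex Δ ℓ := ⟨⟨ℓ, Nat.lt_succ_self ℓ⟩, f⟩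

/-- Restriction of a coloring of the tree to the leaves. -/
def leafColoring {Δ ℓ k : ℕ} (σ : TVertex Δ ℓ → Fin k) : (Fin ℓ → Fin Δ) → Fin k :=
  fun f => σ (leafVertex f)

/-- A total leaf coloring, viewed as a partial one (no `⋆`s). -/
def toPartial {Δ ℓ k : ℕ} (X : (Fin ℓ → Fin Δ) → Fin k) : (Fin ℓ → Fin Δ) → Option (Fin k) :=
  fun f => some (X f)

/-- Probability of the event `E` under the uniform measure `μ_ℓ` on proper colorings. -/
noncomputable def treeProb (Δ ℓ k : ℕ) (E : (TVertex Δ ℓ → Fin k) → Prop) : ℝ :=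
  (Nat.card {σ : TVertex Δ ℓ → Fin k // ProperColoring Δ ℓ k σ ∧ E σ} : ℝ) /
    (Nat.card {σ : TVertex Δ ℓ → Fin k // ProperColoring Δ ℓ k σ} : ℝ)

/-- Expectation of `f` under the uniform measure `μ_ℓ` on proper colorings. -/
noncomputable def treeExp (Δ ℓ k : ℕ) (f : (TVertex Δ ℓ → Fin k) → ℝ) : ℝ :=
  (∑ σ : TVertex Δ ℓ → Fin k, Set.indicator {σ | ProperColoring Δ ℓ k σ} f σ) /
    (Nat.card {σ : TVertex Δ ℓ → Fin k // ProperColoring Δ ℓ k σ} : ℝ)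

/-- `σ` agrees with the partial leaf coloring `X` on every leaf colored by `X`. -/
def AgreesOn {Δ ℓ k : ℕ} (σ : TVertex Δ ℓ → Fin k) (X : (Fin ℓ → Fin Δ) → Option (Fin k)) : Prop :=
  ∀ (f : Fin ℓ → Fin Δ) (c : Fin k), X f = some c → leafColoring σ f = c

/-- `X` is an allowed partial coloring of the leaves. -/
def AllowedP (Δ ℓ k : ℕ) (X : (Fin ℓ → Fin Δ) → Option (Fin k)) : Prop :=
  ∃ σ, ProperColoring Δ ℓ k σ ∧ AgreesOn σ X

/-- `μ_ℓ(σ(root) = c | σ` agrees with `X` at the leaves`)`. -/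
noncomputable def condProbRootP (Δ ℓ k : ℕ) (X : (Fin ℓ → Fin Δ) → Option (Fin k))
    (c : Fin k) : ℝ :=
  (Nat.card {σ : TVertex Δ ℓ → Fin k //
      ProperColoring Δ ℓ k σ ∧ AgreesOn σ X ∧ σ (troot Δ ℓ) = c} : ℝ) /
    (Nat.card {σ : TVertex Δ ℓ → Fin k // ProperColoring Δ ℓ k σ ∧ AgreesOn σ X} : ℝ)

/-- Restriction of a vector indexed by the leaves of `T_{ℓ+1}` to the leaves below
the `j`-th child of the root. -/
def childRestrict {Δ ℓ : ℕ} {β : Sort*} (X : (Fin (ℓ + 1) → Fin Δ) → β) (j : Fin Δ) :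
    (Fin ℓ → Fin Δ) → β := fun g => X (Fin.cons j g)

/-- The recursively defined quantity `P_h(X, c)`. -/
noncomputable def Pfun (Δ k : ℕ) : (h : ℕ) → ((Fin h → Fin Δ) → Option (Fin k)) → Fin k → ℝ
  | 0, X, c =>
    match X (fun i => i.elim0) with
    | none => 1 / (k : ℝ)
    | some d => if d = c then 1 else 0
  | h + 1, X, c =>
    (∏ j : Fin Δ, (1 - Pfun Δ k h (childRestrict X j) c)) /
      ∑ d : Fin k, ∏ j : Fin Δ, (1 - Pfun Δ k h (childRestrict X j) d)

/-- Unbiasing partial colorings of the leaves of `T_ℓ` (meaningful for `ℓ ≥ 1`). -/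
def Unbiasing (Δ k : ℕ) (ε : ℝ) : (ℓ : ℕ) → ((Fin ℓ → Fin Δ) → Option (Fin k)) → Prop
  | 0, _ => True
  | 1, X => (Δ : ℝ) ^ (ε / 2) ≤ (Nat.card {c : Fin k // ∀ f, X f ≠ some c} : ℝ)
  | ℓ + 2, X =>
      (Nat.card {j : Fin Δ // ¬ Unbiasing Δ k ε (ℓ + 1) (childRestrict X j)} : ℝ) ≤
        (Δ : ℝ) ^ ((1 : ℝ) - ε)

/-- Auxiliary notion: every subtree vertex of height `≥ t` has an unbiasing restriction. -/
def HighlyUnbiasingAux (Δ k : ℕ) (ε t : ℝ) :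
    (h : ℕ) → ((Fin h → Fin Δ) → Option (Fin k)) → Prop
  | 0, _ => True
  | h + 1, X => ((t ≤ (h : ℝ) + 1) → Unbiasing Δ k ε (h + 1) X) ∧
      ∀ j : Fin Δ, HighlyUnbiasingAux Δ k ε t h (childRestrict X j)

/-- Highly unbiasing partial colorings of the leaves of `T_ℓ`: the restriction to the
leaves below `v` is unbiasing for every vertex `v` at distance `≥ εℓ` from the leaves. -/
def HighlyUnbiasing (Δ k : ℕ) (ε : ℝ) (ℓ : ℕ) (X : (Fin ℓ → Fin Δ) → Option (Fin k)) : Prop :=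
  HighlyUnbiasingAux Δ k ε (ε * ℓ) ℓ X

/-- `μ↓_{c,ℓ}`: the distribution of the leaf coloring conditioned on the root color `c`. -/
noncomputable def downDist (Δ ℓ k : ℕ) (c : Fin k) (X : (Fin ℓ → Fin Δ) → Fin k) : ℝ :=
  (Nat.card {σ : TVertex Δ ℓ → Fin k //
      ProperColoring Δ ℓ k σ ∧ σ (troot Δ ℓ) = c ∧ leafColoring σ = X} : ℝ) /
    (Nat.card {σ : TVertex Δ ℓ → Fin k // ProperColoring Δ ℓ k σ ∧ σ (troot Δ ℓ) = c} : ℝ)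

/-- `μ↑_{X,ℓ}`: the distribution of the root color given the (total) leaf coloring `X`. -/
noncomputable def upDist (Δ ℓ k : ℕ) (X : (Fin ℓ → Fin Δ) → Fin k) (c : Fin k) : ℝ :=
  condProbRootP Δ ℓ k (toPartial X) c

/-- `μ↓↑_{c,ℓ}`: sample leaves from `μ↓_{c,ℓ}`, then a root color from `μ↑`. -/
noncomputable def downUp (Δ ℓ k : ℕ) (c c' : Fin k) : ℝ :=
  ∑ X : (Fin ℓ → Fin Δ) → Fin k, downDist Δ ℓ k c X * upDist Δ ℓ k X c'

/-- Hamming distance between two leaf colorings. -/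
noncomputable def leafHamming {Δ ℓ k : ℕ} (X Y : (Fin ℓ → Fin Δ) → Fin k) : ℕ :=
  Nat.card {f : Fin ℓ → Fin Δ // X f ≠ Y f}

/-- Total variation distance between two distributions on `Fin k`. -/
noncomputable def tvDist {k : ℕ} (p q : Fin k → ℝ) : ℝ :=
  (∑ c : Fin k, |p c - q c|) / 2

/-- `ν` is a coupling of the distributions `p` and `q`. -/
def IsCoupling {α β : Type*} [Fintype α] [Fintype β] (ν : α × β → ℝ)
    (p : α → ℝ) (q : β → ℝ) : Prop :=
  (∀ z, 0 ≤ ν z) ∧ (∀ x, ∑ y : β, ν (x, y) = p x) ∧ (∀ y, ∑ x : α, ν (x, y) = q y)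

section Tree

variable {Δ : ℕ}

lemma vertex_mk_eq {ℓ i : ℕ} (h₁ h₂ : i < ℓ + 1) {p q : Fin i → Fin Δ} (hpq : ∀ t, p t = q t) :
    (⟨⟨i, h₁⟩, p⟩ : TVertex Δ ℓ) = ⟨⟨i, h₂⟩, q⟩ := by
  rw [funext hpq]

lemma eq_troot_of_depth_eq_zero {ℓ : ℕ} (v : TVertex Δ ℓ) (h : v.1.val = 0) :
    v = troot Δ ℓ := by
  obtain ⟨⟨d, hd⟩, p⟩ := v
  subst h
  exact vertex_mk_eq _ _ fun t => t.elim0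

def ancestor {ℓ : ℕ} (v : TVertex Δ ℓ) (i : ℕ) (hi : i ≤ v.1.val) : TVertex Δ ℓ :=
  ⟨⟨i, lt_of_le_of_lt hi v.1.isLt⟩, fun t => v.2 ⟨t.val, lt_of_lt_of_le t.isLt hi⟩⟩

lemma ancestor_zero {ℓ : ℕ} (v : TVertex Δ ℓ) : ancestor v 0 (Nat.zero_le _) = troot Δ ℓ :=
  eq_troot_of_depth_eq_zero _ rfl

lemma ancestor_tchild {ℓ : ℕ} (v : TVertex Δ ℓ) (h : v.1.val < ℓ) (j : Fin Δ) {i : ℕ}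
    (hi : i ≤ v.1.val) : ancestor (tchild v h j) i (hi.trans (Nat.le_succ _)) = ancestor v i hi :=
  vertex_mk_eq _ _ fun t => Fin.snoc_castSucc (α := fun _ => Fin Δ) (p := v.2) j ⟨t, by omega⟩

end Tree

section KempeChain

variable {Δ k ℓ : ℕ} (c₁ c₂ : Fin k)

/-- `v` lies in the `{c₁, c₂}`-component of the root; in a tree this means that its whole root
path uses only these two colors. -/
def OnKempeChain (σ : TVertex Δ ℓ → Fin k) (v : TVertex Δ ℓ) : Prop :=
  ∀ (i : ℕ) (hi : i ≤ v.1.val), σ (ancestor v i hi) = c₁ ∨ σ (ancestor v i hi) = c₂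

open Classical in
noncomputable def kempeSwap (σ : TVertex Δ ℓ → Fin k) : TVertex Δ ℓ → Fin k :=
  fun v => if OnKempeChain c₁ c₂ σ v then Equiv.swap c₁ c₂ (σ v) else σ v

variable {c₁ c₂} {σ : TVertex Δ ℓ → Fin k}

lemma OnKempeChain.apply_self {v : TVertex Δ ℓ} (h : OnKempeChain c₁ c₂ σ v) :
    σ v = c₁ ∨ σ v = c₂ :=
  h v.1.val le_rfl

lemma onKempeChain_troot :
    OnKempeChain c₁ c₂ σ (troot Δ ℓ) ↔ σ (troot Δ ℓ) = c₁ ∨ σ (troot Δ ℓ) = c₂ := by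
  refine ⟨OnKempeChain.apply_self, fun h i hi => ?_⟩
  obtain rfl : i = 0 := Nat.le_zero.mp hi
  rwa [ancestor_zero]

lemma OnKempeChain.troot {v : TVertex Δ ℓ} (h : OnKempeChain c₁ c₂ σ v) :
    σ (troot Δ ℓ) = c₁ ∨ σ (troot Δ ℓ) = c₂ := by
  simpa only [ancestor_zero] using h 0 (Nat.zero_le _)

lemma onKempeChain_tchild {v : TVertex Δ ℓ} (h : v.1.val < ℓ) (j : Fin Δ) :
    OnKempeChain c₁ c₂ σ (tchild v h j) ↔
      OnKempeChain c₁ c₂ σ v ∧ (σ (tchild v h j) = c₁ ∨ σ (tchild v h j) = c₂) := by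
  refine ⟨fun hc => ⟨fun i hi => ?_, hc.apply_self⟩, fun ⟨hv, hw⟩ i hi => ?_⟩
  · have := hc i (hi.trans (Nat.le_succ _))
    rwa [ancestor_tchild v h j hi] at this
  · rcases Nat.le_succ_iff.mp hi with hle | rfl
    · rw [ancestor_tchild v h j hle]
      exact hv i hle
    · exact hw

lemma swap_eq_or_eq_iff (x : Fin k) :
    (Equiv.swap c₁ c₂ x = c₁ ∨ Equiv.swap c₁ c₂ x = c₂) ↔ (x = c₁ ∨ x = c₂) := by
  rcases eq_or_ne x c₁ with rfl | h₁
  · simp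
  rcases eq_or_ne x c₂ with rfl | h₂
  · simp
  simp [Equiv.swap_apply_of_ne_of_ne h₁ h₂, h₁, h₂]

lemma kempeSwap_eq_or_eq_iff (v : TVertex Δ ℓ) :
    (kempeSwap c₁ c₂ σ v = c₁ ∨ kempeSwap c₁ c₂ σ v = c₂) ↔ (σ v = c₁ ∨ σ v = c₂) := by
  unfold kempeSwap
  split_ifs
  exacts [swap_eq_or_eq_iff _, Iff.rfl]

lemma onKempeChain_kempeSwap (v : TVertex Δ ℓ) :
    OnKempeChain c₁ c₂ (kempeSwap c₁ c₂ σ) v ↔ OnKempeChain c₁ c₂ σ v :=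
  forall₂_congr fun _ _ => kempeSwap_eq_or_eq_iff _

lemma kempeSwap_kempeSwap : kempeSwap c₁ c₂ (kempeSwap c₁ c₂ σ) = σ := by
  funext v
  by_cases h : OnKempeChain c₁ c₂ σ v
  · simp only [kempeSwap, if_pos ((onKempeChain_kempeSwap v).mpr h), if_pos h,
      Equiv.swap_apply_self]
  · simp only [kempeSwap, if_neg (mt (onKempeChain_kempeSwap v).mp h), if_neg h]

lemma ProperColoring.kempeSwap (hσ : ProperColoring Δ ℓ k σ) :
    ProperColoring Δ ℓ k (kempeSwap c₁ c₂ σ) := by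
  intro v h j
  have hchild := onKempeChain_tchild (σ := σ) (c₁ := c₁) (c₂ := c₂) h j
  unfold _root_.kempeSwap
  by_cases hw : OnKempeChain c₁ c₂ σ (tchild v h j)
  · rw [if_pos (hchild.mp hw).1, if_pos hw]
    exact fun heq => hσ v h j ((Equiv.swap c₁ c₂).injective heq)
  by_cases hv : OnKempeChain c₁ c₂ σ v
  · rw [if_pos hv, if_neg hw]
    -- a child of a chain vertex that is off the chain has a color outside `{c₁, c₂}`
    rintro heq
    exact hw (hchild.mpr ⟨hv, heq ▸ (swap_eq_or_eq_iff _).mpr hv.apply_self⟩)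
  · rw [if_neg hv, if_neg hw]
    exact hσ v h j

lemma kempeSwap_troot (h : σ (troot Δ ℓ) = c₁ ∨ σ (troot Δ ℓ) = c₂) :
    kempeSwap c₁ c₂ σ (troot Δ ℓ) = Equiv.swap c₁ c₂ (σ (troot Δ ℓ)) :=
  if_pos (onKempeChain_troot.mpr h)

lemma kempeSwap_ne_iff (hne : c₁ ≠ c₂) (v : TVertex Δ ℓ) :
    kempeSwap c₁ c₂ σ v ≠ σ v ↔ OnKempeChain c₁ c₂ σ v := by
  unfold kempeSwap
  split_ifs with h
  · rcases h.apply_self with h' | h' <;> rw [h'] <;> simp [hne, hne.symm, h]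
  · simp [h]

end KempeChain

section RootDecomposition

variable {Δ k h : ℕ}

def childEmb (j : Fin Δ) (v : TVertex Δ h) : TVertex Δ (h + 1) :=
  ⟨⟨v.1.val + 1, Nat.succ_lt_succ v.1.isLt⟩, Fin.cons j v.2⟩

def subtreeColoring (j : Fin Δ) (σ : TVertex Δ (h + 1) → Fin k) : TVertex Δ h → Fin k :=
  fun v => σ (childEmb j v)

def graft (a : Fin k) (τ : Fin Δ → TVertex Δ h → Fin k) : TVertex Δ (h + 1) → Fin k
  | ⟨⟨0, _⟩, _⟩ => a
  | ⟨⟨i + 1, hi⟩, p⟩ => τ (p 0) ⟨⟨i, Nat.lt_of_succ_lt_succ hi⟩, Fin.tail p⟩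

lemma graft_troot (a : Fin k) (τ : Fin Δ → TVertex Δ h → Fin k) :
    graft a τ (troot Δ (h + 1)) = a := rfl

lemma vertex_cases (v : TVertex Δ (h + 1)) :
    v = troot Δ (h + 1) ∨ ∃ (j : Fin Δ) (w : TVertex Δ h), v = childEmb j w := by
  obtain ⟨⟨_ | i, hi⟩, p⟩ := v
  · exact Or.inl (eq_troot_of_depth_eq_zero _ rfl)
  · exact Or.inr ⟨p 0, ⟨⟨i, Nat.lt_of_succ_lt_succ hi⟩, Fin.tail p⟩,
      vertex_mk_eq _ _ fun t => (Fin.cons_self_tail p).symm ▸ rfl⟩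

lemma graft_subtreeColoring (σ : TVertex Δ (h + 1) → Fin k) :
    graft (σ (troot Δ (h + 1))) (fun j => subtreeColoring j σ) = σ := by
  funext v
  rcases vertex_cases v with rfl | ⟨j, w, rfl⟩ <;> rfl

def coloringSplitEquiv :
    (TVertex Δ (h + 1) → Fin k) ≃ Fin k × (Fin Δ → TVertex Δ h → Fin k) where
  toFun σ := (σ (troot Δ (h + 1)), fun j => subtreeColoring j σ)
  invFun x := graft x.1 x.2
  left_inv := graft_subtreeColoring
  right_inv _ := rfl

lemma childEmb_tchild (j : Fin Δ) (v : TVertex Δ h) (hv : v.1.val < h) (x : Fin Δ) :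
    childEmb j (tchild v hv x) = tchild (childEmb j v) (Nat.succ_lt_succ hv) x :=
  vertex_mk_eq _ _ fun _ => (Fin.cons_snoc_eq_snoc_cons j v.2 x ▸ rfl : _)

lemma tchild_troot (x : Fin Δ) (hr : (troot Δ (h + 1)).1.val < h + 1) :
    tchild (troot Δ (h + 1)) hr x = childEmb x (troot Δ h) :=
  vertex_mk_eq _ _ fun t => by fin_cases t; rfl

lemma properColoring_succ_iff (σ : TVertex Δ (h + 1) → Fin k) :
    ProperColoring Δ (h + 1) k σ ↔
      ∀ j : Fin Δ, subtreeColoring j σ (troot Δ h) ≠ σ (troot Δ (h + 1)) ∧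
        ProperColoring Δ h k (subtreeColoring j σ) := by
  refine ⟨fun hσ j => ⟨?_, fun v hv x => ?_⟩, fun H v hv x => ?_⟩
  · have := hσ (troot Δ (h + 1)) (Nat.succ_pos h) j
    rw [tchild_troot j (Nat.succ_pos h)] at this
    exact this.symm
  · have := hσ (childEmb j v) (Nat.succ_lt_succ hv) x
    rwa [← childEmb_tchild] at this
  · rcases vertex_cases v with rfl | ⟨j, w, rfl⟩
    · rw [tchild_troot]
      exact (H x).1.symm
    · have hw : w.1.val < h := Nat.lt_of_succ_lt_succ hv
      rw [← childEmb_tchild j w hw]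
      exact (H j).2 w hw x

end RootDecomposition

section KempeLeafCount

variable {Δ k : ℕ} {c₁ c₂ : Fin k}

lemma ancestor_childEmb {h : ℕ} (j : Fin Δ) (v : TVertex Δ h) {i : ℕ} (hi : i ≤ v.1.val) :
    ancestor (childEmb j v) (i + 1) (Nat.succ_le_succ hi) = childEmb j (ancestor v i hi) :=
  vertex_mk_eq _ _ fun t => Fin.cases rfl (fun _ => rfl) t

lemma onKempeChain_childEmb {h : ℕ} (σ : TVertex Δ (h + 1) → Fin k) (j : Fin Δ)
    (v : TVertex Δ h) :
    OnKempeChain c₁ c₂ σ (childEmb j v) ↔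
      (σ (troot Δ (h + 1)) = c₁ ∨ σ (troot Δ (h + 1)) = c₂) ∧
        OnKempeChain c₁ c₂ (subtreeColoring j σ) v := by
  refine ⟨fun H => ⟨H.troot, fun i hi => ?_⟩, fun ⟨hroot, H⟩ i hi => ?_⟩
  · have := H (i + 1) (Nat.succ_le_succ hi)
    rwa [ancestor_childEmb j v hi] at this
  · rcases i with _ | i
    · rwa [ancestor_zero]
    · have hi' : i ≤ v.1.val := Nat.le_of_succ_le_succ hi
      rw [ancestor_childEmb j v hi']
      exact H i hi'

variable (c₁ c₂) in
noncomputable def kempeLeafCount {ℓ : ℕ} (σ : TVertex Δ ℓ → Fin k) : ℕ :=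
  Nat.card {f : Fin ℓ → Fin Δ // OnKempeChain c₁ c₂ σ (leafVertex f)}

lemma kempeLeafCount_zero {σ : TVertex Δ 0 → Fin k}
    (hroot : σ (troot Δ 0) = c₁ ∨ σ (troot Δ 0) = c₂) : kempeLeafCount c₁ c₂ σ = 1 := by
  have hall (f : Fin 0 → Fin Δ) : OnKempeChain c₁ c₂ σ (leafVertex f) := by
    rwa [eq_troot_of_depth_eq_zero (leafVertex f) rfl, onKempeChain_troot]
  rw [kempeLeafCount, Nat.card_congr (Equiv.subtypeUnivEquiv hall), Nat.card_unique]

lemma kempeLeafCount_eq_zero {ℓ : ℕ} {σ : TVertex Δ ℓ → Fin k}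
    (hroot : ¬(σ (troot Δ ℓ) = c₁ ∨ σ (troot Δ ℓ) = c₂)) : kempeLeafCount c₁ c₂ σ = 0 :=
  have : IsEmpty {f : Fin ℓ → Fin Δ // OnKempeChain c₁ c₂ σ (leafVertex f)} :=
    ⟨fun f => hroot f.2.troot⟩
  Nat.card_of_isEmpty

lemma kempeLeafCount_succ {h : ℕ} {σ : TVertex Δ (h + 1) → Fin k}
    (hroot : σ (troot Δ (h + 1)) = c₁ ∨ σ (troot Δ (h + 1)) = c₂) :
    kempeLeafCount c₁ c₂ σ = ∑ j : Fin Δ, kempeLeafCount c₁ c₂ (subtreeColoring j σ) := by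
  let e : {f : Fin (h + 1) → Fin Δ // OnKempeChain c₁ c₂ σ (leafVertex f)} ≃
      Σ j : Fin Δ, {g : Fin h → Fin Δ //
        OnKempeChain c₁ c₂ (subtreeColoring j σ) (leafVertex g)} :=
    (Equiv.subtypeEquiv (Fin.consEquiv fun _ => Fin Δ).symm fun f => by
      conv_lhs => rw [← Fin.cons_self_tail f]
      exact (onKempeChain_childEmb σ (f 0) (leafVertex (Fin.tail f))).trans
        (and_iff_right hroot)).trans
      (Equiv.subtypeProdEquivSigmaSubtype fun j g =>
        OnKempeChain c₁ c₂ (subtreeColoring j σ) (leafVertex g))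
  simp only [kempeLeafCount, Nat.card_congr e, Nat.card_sigma]

lemma leafHamming_kempeSwap {ℓ : ℕ} (hne : c₁ ≠ c₂) (σ : TVertex Δ ℓ → Fin k) :
    leafHamming (leafColoring σ) (leafColoring (kempeSwap c₁ c₂ σ)) = kempeLeafCount c₁ c₂ σ :=
  Nat.card_congr <| Equiv.subtypeEquivRight fun f =>
    ne_comm.trans (kempeSwap_ne_iff hne (leafVertex f))

end KempeLeafCount

section RootedSum

open Finset

variable {Δ k h : ℕ}

noncomputable def rootedSum (Δ h k : ℕ) (w : (TVertex Δ h → Fin k) → ℝ) (a : Fin k) : ℝ :=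
  ∑ σ, Set.indicator {σ | ProperColoring Δ h k σ ∧ σ (troot Δ h) = a} w σ

lemma rootedSum_zero (w : (TVertex Δ 0 → Fin k) → ℝ) (a : Fin k) :
    rootedSum Δ 0 k w a = w fun _ => a := by
  have hunique : Unique (TVertex Δ 0) :=
    ⟨⟨troot Δ 0⟩, fun v => eq_troot_of_depth_eq_zero v (Nat.lt_one_iff.mp v.1.isLt)⟩
  rw [rootedSum, ← (Equiv.funUnique (TVertex Δ 0) (Fin k)).symm.sum_comp]
  refine (Fintype.sum_eq_single a fun b hb => ?_).trans ?_
  · exact Set.indicator_of_notMem (fun hm => hb hm.2) w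
  · apply Set.indicator_of_mem
    exact ⟨fun _ h => absurd h (Nat.not_lt_zero _), rfl⟩

lemma sum_indicator_troot_ne (w : (TVertex Δ h → Fin k) → ℝ) (a : Fin k) :
    ∑ υ, Set.indicator {υ | ProperColoring Δ h k υ ∧ υ (troot Δ h) ≠ a} w υ =
      ∑ b ∈ univ.erase a, rootedSum Δ h k w b := by
  classical
  simp only [rootedSum]
  rw [Finset.sum_comm]
  refine sum_congr rfl fun υ _ => ?_
  by_cases hυ : ProperColoring Δ h k υ <;> simp [Set.indicator_apply, hυ, eq_comm]

lemma graft_mem_iff (a : Fin k) (τ : Fin Δ → TVertex Δ h → Fin k) :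
    graft a τ ∈ {σ | ProperColoring Δ (h + 1) k σ ∧ σ (troot Δ (h + 1)) = a} ↔
      ∀ j, τ j ∈ {υ | ProperColoring Δ h k υ ∧ υ (troot Δ h) ≠ a} := by
  show ProperColoring Δ (h + 1) k (graft a τ) ∧ a = a ↔ _
  rw [and_iff_left rfl, properColoring_succ_iff]
  exact forall_congr' fun j => and_comm

lemma rootedSum_succ (w : (TVertex Δ (h + 1) → Fin k) → ℝ) (w' : (TVertex Δ h → Fin k) → ℝ)
    (a : Fin k) (hw : ∀ τ, w (graft a τ) = ∏ j, w' (τ j)) :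
    rootedSum Δ (h + 1) k w a = (∑ b ∈ univ.erase a, rootedSum Δ h k w' b) ^ Δ := by
  classical
  rw [rootedSum, ← coloringSplitEquiv.symm.sum_comp, Fintype.sum_prod_type,
    Fintype.sum_eq_single a fun b hb => sum_eq_zero fun τ _ =>
      Set.indicator_of_notMem (fun hm => hb hm.2) _,
    ← sum_indicator_troot_ne, Fintype.sum_pow]
  refine Fintype.sum_congr _ _ fun τ => ?_
  show Set.indicator _ w (graft a τ) = _
  simp only [Set.indicator_apply, Fintype.prod_ite_zero, graft_mem_iff, hw]
  congr 1

end RootedSum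

section ChainMoments

open Finset Real

variable {Δ k : ℕ}

lemma sum_indicator_const {α : Type*} [Fintype α] (p : α → Prop) (c : ℝ) :
    ∑ x, {x | p x}.indicator (fun _ => c) x = Nat.card {x // p x} * c := by
  classical
  simp only [Set.indicator_apply, Set.mem_ofPred_eq, sum_ite, sum_const, nsmul_eq_mul, mul_zero,
    add_zero, Nat.card_eq_fintype_card, Fintype.card_subtype]

lemma rootedSum_nonneg {h : ℕ} {w : (TVertex Δ h → Fin k) → ℝ} (hw : ∀ σ, 0 ≤ w σ)
    (a : Fin k) : 0 ≤ rootedSum Δ h k w a :=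
  sum_nonneg fun σ _ => Set.indicator_nonneg (fun σ _ => hw σ) σ

noncomputable def rootedCount (Δ k : ℕ) : ℕ → ℝ
  | 0 => 1
  | h + 1 => (((k : ℝ) - 1) * rootedCount Δ k h) ^ Δ

lemma rootedSum_one (h : ℕ) (a : Fin k) : rootedSum Δ h k 1 a = rootedCount Δ k h := by
  induction h generalizing a with
  | zero => rw [rootedSum_zero]; rfl
  | succ h ih =>
    rw [rootedSum_succ 1 1 a fun _ => by simp, sum_congr rfl fun b _ => ih b, sum_const,
      card_erase_of_mem (mem_univ a), card_univ, Fintype.card_fin, nsmul_eq_mul,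
      Nat.cast_sub a.pos, Nat.cast_one]
    rfl

lemma card_rooted_eq_rootedCount (h : ℕ) (a : Fin k) :
    (Nat.card {σ : TVertex Δ h → Fin k // ProperColoring Δ h k σ ∧ σ (troot Δ h) = a} : ℝ) =
      rootedCount Δ k h := by
  rw [← rootedSum_one h a, rootedSum]
  exact (mul_one _).symm.trans (sum_indicator_const _ 1).symm

lemma rootedCount_nonneg (h : ℕ) (a : Fin k) : 0 ≤ rootedCount Δ k h :=
  rootedSum_one (Δ := Δ) h a ▸ rootedSum_nonneg (fun _ => zero_le_one) a

variable {c₁ c₂ : Fin k} {t : ℝ}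

lemma rootedSum_exp_kempeLeafCount_of_not {h : ℕ} {a : Fin k} (ha : ¬(a = c₁ ∨ a = c₂)) :
    rootedSum Δ h k (fun σ => exp (t * kempeLeafCount c₁ c₂ σ)) a = rootedCount Δ k h := by
  rw [← rootedSum_one h a]
  refine sum_congr rfl fun σ _ => congrFun (Set.indicator_congr fun σ hσ => ?_) σ
  rw [kempeLeafCount_eq_zero (hσ.2 ▸ ha : ¬(σ (troot Δ h) = c₁ ∨ _)), Nat.cast_zero, mul_zero,
    exp_zero, Pi.one_apply]

lemma rootedSum_exp_kempeLeafCount_succ {h : ℕ} {a : Fin k} (ha : a = c₁ ∨ a = c₂) :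
    rootedSum Δ (h + 1) k (fun σ => exp (t * kempeLeafCount c₁ c₂ σ)) a =
      (∑ b ∈ univ.erase a, rootedSum Δ h k (fun σ => exp (t * kempeLeafCount c₁ c₂ σ)) b) ^ Δ :=
  rootedSum_succ _ _ a fun τ => by
    rw [kempeLeafCount_succ (graft_troot a τ ▸ ha : graft a τ (troot Δ (h + 1)) = c₁ ∨ _),
      Nat.cast_sum, mul_sum, exp_sum]
    rfl

lemma sum_erase_le_of_le {α : Type*} [Fintype α] [DecidableEq α] {f : α → ℝ} {a a' : α}
    (haa' : a ≠ a') {M N : ℝ} (ha' : f a' ≤ M) (hf : ∀ b, b ≠ a → b ≠ a' → f b = N) :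
    ∑ b ∈ univ.erase a, f b ≤ M + (Fintype.card α - 2) * N := by
  have ha'mem : a' ∈ univ.erase a := mem_erase.mpr ⟨haa'.symm, mem_univ a'⟩
  have hcard : (#((univ.erase a).erase a') : ℝ) = Fintype.card α - 2 := by
    have h₁ := card_erase_add_one ha'mem
    have h₂ := card_erase_add_one (mem_univ a)
    rw [card_univ] at h₂
    rw [← h₂, ← h₁]
    push_cast
    ring
  rw [← add_sum_erase _ _ ha'mem, sum_congr rfl fun b hb => hf b (ne_of_mem_erase
    (mem_of_mem_erase hb)) (ne_of_mem_erase hb), sum_const, nsmul_eq_mul, hcard]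
  linarith

lemma pow_exp_mul_add_le {N x r : ℝ} (hN : 0 ≤ N) (hx : 0 ≤ x) (hx₁ : x ≤ 1) (hk : 2 ≤ k)
    (hm : 2 * Δ ≤ (r - 1) * (k - 1)) :
    (exp x * N + (k - 2) * N) ^ Δ ≤ exp (x * r) * ((k - 1) * N) ^ Δ := by
  have hk₂ : (2 : ℝ) ≤ k := by exact_mod_cast hk
  have hk₁ : (0 : ℝ) < k - 1 := by linarith
  have hexp : exp x ≤ 1 + 2 * x := by
    have := abs_exp_sub_one_le (x := x) (by rwa [abs_of_nonneg hx])
    rw [abs_of_nonneg hx] at this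
    linarith [le_abs_self (exp x - 1)]
  have hbase : exp x * N + (k - 2) * N ≤ exp (2 * x / (k - 1)) * ((k - 1) * N) :=
    calc exp x * N + (k - 2) * N ≤ (1 + 2 * x / (k - 1)) * ((k - 1) * N) := by
          rw [add_mul, one_mul, div_mul_eq_mul_div, mul_div_assoc, mul_div_cancel_left₀ _
            hk₁.ne']
          nlinarith
      _ ≤ exp (2 * x / (k - 1)) * ((k - 1) * N) := by
          gcongr
          linarith [add_one_le_exp (2 * x / (k - 1))]
  have hexponent : Δ * (2 * x / (k - 1)) ≤ x * r := by
    rw [mul_div_assoc', div_le_iff₀ hk₁]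
    nlinarith
  calc (exp x * N + (k - 2) * N) ^ Δ ≤ (exp (2 * x / (k - 1)) * ((k - 1) * N)) ^ Δ :=
        pow_le_pow_left₀ (by positivity) hbase Δ
    _ = exp (Δ * (2 * x / (k - 1))) * ((k - 1) * N) ^ Δ := by rw [mul_pow, ← exp_nat_mul]
    _ ≤ exp (x * r) * ((k - 1) * N) ^ Δ := by gcongr

end ChainMoments

section ChainTail

open Finset Real

variable {Δ k : ℕ} {c₁ c₂ : Fin k} {t r : ℝ}

/-- `r - 1` is at least twice the mean offspring number `Δ / (k - 1)` of the chain; the factor 2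
pays for `exp x ≤ 1 + 2 x` on `[0, 1]`. -/
lemma rootedSum_exp_kempeLeafCount_le (hne : c₁ ≠ c₂) (ht : 0 ≤ t) (hr : 1 ≤ r)
    (hm : 2 * Δ ≤ (r - 1) * (k - 1)) (h : ℕ) (htr : t * r ^ h ≤ 1) {a : Fin k}
    (ha : a = c₁ ∨ a = c₂) :
    rootedSum Δ h k (fun σ => exp (t * kempeLeafCount c₁ c₂ σ)) a ≤
      exp (t * r ^ h) * rootedCount Δ k h := by
  induction h generalizing a with
  | zero =>
    simp [rootedSum_zero, kempeLeafCount_zero (σ := fun _ : TVertex Δ 0 => a) ha, rootedCount]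
  | succ h ih =>
    have htr' : t * r ^ h ≤ 1 :=
      (mul_le_mul_of_nonneg_left (pow_le_pow_right₀ hr h.le_succ) ht).trans htr
    obtain ⟨a', haa', ha', hoff⟩ : ∃ a', a ≠ a' ∧ (a' = c₁ ∨ a' = c₂) ∧
        ∀ b, b ≠ a → b ≠ a' → ¬(b = c₁ ∨ b = c₂) := by
      rcases ha with rfl | rfl
      exacts [⟨c₂, hne, Or.inr rfl, by tauto⟩, ⟨c₁, hne.symm, Or.inl rfl, by tauto⟩]
    have hsum := sum_erase_le_of_le haa' (ih htr' ha') fun b hb hb' =>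
      rootedSum_exp_kempeLeafCount_of_not (Δ := Δ) (h := h) (t := t) (hoff b hb hb')
    rw [Fintype.card_fin] at hsum
    rw [rootedSum_exp_kempeLeafCount_succ ha, rootedCount, pow_succ, ← mul_assoc]
    exact (pow_le_pow_left₀ (sum_nonneg fun b _ => rootedSum_nonneg (fun _ => (exp_pos _).le) b)
      hsum Δ).trans (pow_exp_mul_add_le (rootedCount_nonneg h a) (by positivity) htr'
        (Fintype.card_fin k ▸ Fintype.one_lt_card_iff.mpr ⟨c₁, c₂, hne⟩) hm)

lemma card_lt_kempeLeafCount_mul_exp_le (ht : 0 ≤ t) (A : ℝ) (ℓ : ℕ) :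
    (Nat.card {σ : TVertex Δ ℓ → Fin k //
        (ProperColoring Δ ℓ k σ ∧ σ (troot Δ ℓ) = c₁) ∧ A < kempeLeafCount c₁ c₂ σ} : ℝ) *
      exp (t * A) ≤ rootedSum Δ ℓ k (fun σ => exp (t * kempeLeafCount c₁ c₂ σ)) c₁ := by
  rw [← sum_indicator_const]
  refine sum_le_sum fun σ _ => ?_
  by_cases hσ : (ProperColoring Δ ℓ k σ ∧ σ (troot Δ ℓ) = c₁) ∧ A < kempeLeafCount c₁ c₂ σ
  · rw [Set.indicator_of_mem (by exact hσ), Set.indicator_of_mem (by exact hσ.1)]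
    exact exp_le_exp.mpr (mul_le_mul_of_nonneg_left hσ.2.le ht)
  · rw [Set.indicator_of_notMem (by exact hσ)]
    exact Set.indicator_nonneg (fun _ _ => (exp_pos _).le) σ

lemma card_lt_kempeLeafCount_le (hne : c₁ ≠ c₂) (ht : 0 ≤ t) (hr : 1 ≤ r)
    (hm : 2 * Δ ≤ (r - 1) * (k - 1)) {ℓ : ℕ} (htr : t * r ^ ℓ ≤ 1) (A : ℝ) :
    (Nat.card {σ : TVertex Δ ℓ → Fin k //
        (ProperColoring Δ ℓ k σ ∧ σ (troot Δ ℓ) = c₁) ∧ A < kempeLeafCount c₁ c₂ σ} : ℝ) ≤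
      exp (1 - t * A) * Nat.card {σ : TVertex Δ ℓ → Fin k //
        ProperColoring Δ ℓ k σ ∧ σ (troot Δ ℓ) = c₁} := by
  rw [card_rooted_eq_rootedCount, exp_sub, div_mul_eq_mul_div, le_div_iff₀ (exp_pos _)]
  calc _ ≤ rootedSum Δ ℓ k (fun σ => exp (t * kempeLeafCount c₁ c₂ σ)) c₁ :=
        card_lt_kempeLeafCount_mul_exp_le ht A ℓ
    _ ≤ exp (t * r ^ ℓ) * rootedCount Δ k ℓ :=
        rootedSum_exp_kempeLeafCount_le hne ht hr hm ℓ htr (Or.inl rfl)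
    _ ≤ exp 1 * rootedCount Δ k ℓ :=
        mul_le_mul_of_nonneg_right (exp_le_exp.mpr htr) (rootedCount_nonneg ℓ c₁)

end ChainTail

section UniformPushforward

open Finset

variable {α β γ : Type*}

noncomputable def uniformPushforward (Q : α → Prop) (g : α → β) (b : β) : ℝ :=
  Nat.card {a // Q a ∧ g a = b} / Nat.card {a // Q a}

lemma uniformPushforward_nonneg (Q : α → Prop) (g : α → β) (b : β) :
    0 ≤ uniformPushforward Q g b :=
  div_nonneg (Nat.cast_nonneg _) (Nat.cast_nonneg _)

lemma sum_card_fiber [Fintype α] [Fintype β] (Q : α → Prop) (g : α → β) :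
    ∑ b, (Nat.card {a // Q a ∧ g a = b} : ℝ) = Nat.card {a // Q a} := by
  classical
  simp only [Nat.card_eq_fintype_card, Fintype.card_subtype, ← filter_filter]
  exact_mod_cast (card_eq_sum_card_fiberwise fun x _ => mem_univ (g x)).symm

lemma sum_indicator_uniformPushforward [Fintype α] [Fintype β] (Q : α → Prop) (g : α → β)
    (R : β → Prop) :
    ∑ b, {b | R b}.indicator (uniformPushforward Q g) b =
      Nat.card {a // Q a ∧ R (g a)} / Nat.card {a // Q a} := by
  have hfiber (b : β) : {b | R b}.indicator (uniformPushforward Q g) b =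
      Nat.card {a // (Q a ∧ R (g a)) ∧ g a = b} / Nat.card {a // Q a} := by
    by_cases hb : R b
    · rw [Set.indicator_of_mem (by exact hb), uniformPushforward,
        Nat.card_congr (Equiv.subtypeEquivRight fun a => (⟨fun h => ⟨⟨h.1, h.2 ▸ hb⟩, h.2⟩,
          fun h => ⟨h.1.1, h.2⟩⟩ : Q a ∧ g a = b ↔ (Q a ∧ R (g a)) ∧ g a = b))]
    · have : IsEmpty {a // (Q a ∧ R (g a)) ∧ g a = b} := ⟨fun a => hb (a.2.2 ▸ a.2.1.2)⟩
      rw [Set.indicator_of_notMem (by exact hb), Nat.card_of_isEmpty, Nat.cast_zero, zero_div]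
  simp only [hfiber, ← sum_div, sum_card_fiber]

lemma sum_uniformPushforward_prod_left [Fintype α] [Fintype γ] (Q : α → Prop) (f : α → β)
    (g : α → γ) (x : β) :
    ∑ y, uniformPushforward Q (fun a => (f a, g a)) (x, y) = uniformPushforward Q f x := by
  simp only [uniformPushforward, ← sum_div, Prod.mk.injEq, ← and_assoc, sum_card_fiber]

lemma sum_uniformPushforward_prod_right [Fintype α] [Fintype β] (Q : α → Prop) (f : α → β)
    (g : α → γ) (y : γ) :
    ∑ x, uniformPushforward Q (fun a => (f a, g a)) (x, y) = uniformPushforward Q g y := by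
  simp only [uniformPushforward, ← sum_div, Prod.mk.injEq, and_right_comm (b := f _ = _),
    ← and_assoc, sum_card_fiber]

lemma uniformPushforward_congr {Q Q' : α → Prop} {g g' : α → β}
    (e : {a // Q a} ≃ {a // Q' a}) (hg : ∀ a, g' (e a) = g a) :
    uniformPushforward Q g = uniformPushforward Q' g' := by
  funext b
  have hfiber : {a // Q a ∧ g a = b} ≃ {a // Q' a ∧ g' a = b} :=
    (Equiv.subtypeSubtypeEquivSubtypeInter Q (g · = b)).symm.trans <|
      (e.subtypeEquiv fun a => by rw [hg]).trans (Equiv.subtypeSubtypeEquivSubtypeInter Q' _)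
  rw [uniformPushforward, uniformPushforward, Nat.card_congr hfiber, Nat.card_congr e]

end UniformPushforward

section KempeCoupling

variable {Δ ℓ k : ℕ} {c₁ c₂ : Fin k}

noncomputable def kempeCoupling (Δ ℓ k : ℕ) (c₁ c₂ : Fin k) :
    ((Fin ℓ → Fin Δ) → Fin k) × ((Fin ℓ → Fin Δ) → Fin k) → ℝ :=
  uniformPushforward (fun σ : TVertex Δ ℓ → Fin k => ProperColoring Δ ℓ k σ ∧ σ (troot Δ ℓ) = c₁)
    fun σ => (leafColoring σ, leafColoring (kempeSwap c₁ c₂ σ))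

lemma downDist_eq_uniformPushforward (c : Fin k) :
    downDist Δ ℓ k c = uniformPushforward
      (fun σ : TVertex Δ ℓ → Fin k => ProperColoring Δ ℓ k σ ∧ σ (troot Δ ℓ) = c) leafColoring := by
  funext X
  rw [downDist, uniformPushforward, Nat.card_congr (Equiv.subtypeEquivRight fun _ => and_assoc)]

variable (c₁ c₂) in
noncomputable def rootedKempeEquiv :
    {σ : TVertex Δ ℓ → Fin k // ProperColoring Δ ℓ k σ ∧ σ (troot Δ ℓ) = c₁} ≃
      {σ : TVertex Δ ℓ → Fin k // ProperColoring Δ ℓ k σ ∧ σ (troot Δ ℓ) = c₂} where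
  toFun σ := ⟨kempeSwap c₁ c₂ σ.1, σ.2.1.kempeSwap, by
    rw [kempeSwap_troot (Or.inl σ.2.2), σ.2.2, Equiv.swap_apply_left]⟩
  invFun τ := ⟨kempeSwap c₁ c₂ τ.1, τ.2.1.kempeSwap, by
    rw [kempeSwap_troot (Or.inr τ.2.2), τ.2.2, Equiv.swap_apply_right]⟩
  left_inv σ := Subtype.ext kempeSwap_kempeSwap
  right_inv τ := Subtype.ext kempeSwap_kempeSwap

lemma kempeCoupling_isCoupling :
    IsCoupling (kempeCoupling Δ ℓ k c₁ c₂) (downDist Δ ℓ k c₁) (downDist Δ ℓ k c₂) := by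
  refine ⟨fun _ => uniformPushforward_nonneg _ _ _, fun X => ?_, fun Y => ?_⟩
  · rw [kempeCoupling, sum_uniformPushforward_prod_left, downDist_eq_uniformPushforward]
  · rw [kempeCoupling, sum_uniformPushforward_prod_right, downDist_eq_uniformPushforward]
    exact congrFun (uniformPushforward_congr (rootedKempeEquiv c₁ c₂) fun _ => rfl) Y

lemma sum_indicator_kempeCoupling (hne : c₁ ≠ c₂) (A : ℝ) :
    ∑ q, {q : ((Fin ℓ → Fin Δ) → Fin k) × ((Fin ℓ → Fin Δ) → Fin k) |
        A < leafHamming q.1 q.2}.indicator (kempeCoupling Δ ℓ k c₁ c₂) q =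
      Nat.card {σ : TVertex Δ ℓ → Fin k //
          (ProperColoring Δ ℓ k σ ∧ σ (troot Δ ℓ) = c₁) ∧ A < kempeLeafCount c₁ c₂ σ} /
        Nat.card {σ : TVertex Δ ℓ → Fin k // ProperColoring Δ ℓ k σ ∧ σ (troot Δ ℓ) = c₁} := by
  simp only [kempeCoupling, sum_indicator_uniformPushforward, leafHamming_kempeSwap hne]

lemma sum_indicator_kempeCoupling_le (hne : c₁ ≠ c₂) {t r : ℝ}
    (ht : 0 ≤ t) (hr : 1 ≤ r) (hm : 2 * Δ ≤ (r - 1) * (k - 1)) (htr : t * r ^ ℓ ≤ 1) (A : ℝ) :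
    ∑ q, {q : ((Fin ℓ → Fin Δ) → Fin k) × ((Fin ℓ → Fin Δ) → Fin k) |
        A < leafHamming q.1 q.2}.indicator (kempeCoupling Δ ℓ k c₁ c₂) q ≤
      Real.exp (1 - t * A) := by
  rw [sum_indicator_kempeCoupling hne]
  exact div_le_of_le_mul₀ (Nat.cast_nonneg _) (Real.exp_pos _).le
    (card_lt_kempeLeafCount_le hne ht hr hm htr A)

end KempeCoupling

section Parameters

open Filter Real

/-- For `k > Δ / log Δ` the branching bound `2Δ / (k - 1) + 1` is `O(log Δ)`. -/
lemma exists_branching_le_rpow {δ : ℝ} (hδ : 0 < δ) :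
    ∃ Δ₀ : ℕ, ∀ Δ : ℕ, Δ₀ < Δ → ∀ k : ℕ, (Δ : ℝ) / log Δ < k →
      2 ≤ (Δ : ℝ) ∧ 1 < (k : ℝ) ∧ 2 * Δ / (k - 1) + 1 ≤ (Δ : ℝ) ^ δ := by
  have hev : ∀ᶠ x : ℝ in atTop, 2 ≤ x ∧ 1 ≤ log x ∧ 2 * log x ≤ x ∧ 5 * log x ≤ x ^ δ := by
    filter_upwards [eventually_ge_atTop 2, tendsto_log_atTop.eventually_ge_atTop 1,
      (isLittleO_log_rpow_atTop one_pos).bound (c := 1 / 2) (by norm_num),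
      (isLittleO_log_rpow_atTop hδ).bound (c := 1 / 5) (by norm_num)] with x hx hlog h₁ h₂
    have hx0 : 0 ≤ x := by linarith
    rw [norm_of_nonneg (by linarith), norm_of_nonneg (rpow_nonneg hx0 _), rpow_one] at h₁
    rw [norm_of_nonneg (by linarith), norm_of_nonneg (rpow_nonneg hx0 _)] at h₂
    exact ⟨hx, hlog, by linarith, by linarith⟩
  obtain ⟨Δ₀, hΔ₀⟩ := eventually_atTop.mp (tendsto_natCast_atTop_atTop.eventually hev)
  refine ⟨Δ₀, fun Δ hΔ k hk => ?_⟩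
  obtain ⟨hΔ2, hlog, h2log, h5log⟩ := hΔ₀ Δ hΔ.le
  have hL : 0 < log (Δ : ℝ) := by linarith
  have hhalf : 1 ≤ Δ / (2 * log (Δ : ℝ)) := by rw [le_div_iff₀ (by positivity)]; linarith
  have hk₁ : Δ / (2 * log (Δ : ℝ)) ≤ k - 1 := by
    have : (Δ : ℝ) / log Δ = 2 * (Δ / (2 * log Δ)) := by field_simp
    linarith
  refine ⟨hΔ2, by linarith, ?_⟩
  have : 2 * Δ / (k - 1) ≤ 4 * log (Δ : ℝ) := by
    rw [div_le_iff₀ (by linarith)]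
    have : 4 * log (Δ : ℝ) * (Δ / (2 * log Δ)) = 2 * Δ := by field_simp; ring
    nlinarith
  linarith

lemma rpow_add_one_le_rpow_div_pow {x r s : ℝ} {ℓ : ℕ} (hx : 2 ≤ x) (hr : 0 < r) (hs : 80 ≤ s)
    (hrℓ : r ^ ℓ ≤ x ^ (s / 80)) : x ^ (s / 10) + 1 ≤ x ^ (s / 8) / r ^ ℓ := by
  have hx0 : 0 < x := by linarith
  have h₁ : 1 ≤ x ^ (s / 10) := one_le_rpow (by linarith) (by linarith)
  have h₂ : 2 ≤ x ^ (s / 80) :=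
    calc 2 ≤ x ^ (1 : ℝ) := (rpow_one x).symm ▸ hx
      _ ≤ x ^ (s / 80) := rpow_le_rpow_of_exponent_le (by linarith) (by linarith)
  calc x ^ (s / 10) + 1 ≤ x ^ (s / 10) * x ^ (s / 80) := by nlinarith
    _ = x ^ (s / 8) / x ^ (s / 80) := by
        rw [eq_div_iff (rpow_pos_of_pos hx0 _).ne', mul_assoc, ← rpow_add hx0, ← rpow_add hx0]
        ring_nf
    _ ≤ x ^ (s / 8) / r ^ ℓ := div_le_div_of_nonneg_left (by positivity) (by positivity) hrℓ

lemma sum_indicator_kempeCoupling_le_exp {Δ ℓ k : ℕ} {c₁ c₂ : Fin k} (hne : c₁ ≠ c₂) {ε : ℝ}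
    (hΔ : 2 ≤ (Δ : ℝ)) (hk : 1 < (k : ℝ)) (hbranch : 2 * Δ / (k - 1) + 1 ≤ (Δ : ℝ) ^ (ε / 80))
    (hεℓ : 80 ≤ ε * ℓ) :
    ∑ q, {q : ((Fin ℓ → Fin Δ) → Fin k) × ((Fin ℓ → Fin Δ) → Fin k) |
        (Δ : ℝ) ^ (ε * ℓ / 8) < leafHamming q.1 q.2}.indicator (kempeCoupling Δ ℓ k c₁ c₂) q ≤
      exp (-(Δ : ℝ) ^ (ε * ℓ / 10)) := by
  set r : ℝ := 2 * Δ / (k - 1) + 1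
  have hr : 1 ≤ r := le_add_of_nonneg_left (div_nonneg (by positivity) (by linarith))
  have hm : 2 * Δ ≤ (r - 1) * (k - 1) := by
    rw [add_sub_cancel_right, div_mul_cancel₀ _ (by linarith)]
  have hrℓ : r ^ ℓ ≤ (Δ : ℝ) ^ (ε * ℓ / 80) :=
    calc r ^ ℓ ≤ ((Δ : ℝ) ^ (ε / 80)) ^ ℓ := pow_le_pow_left₀ (by linarith) hbranch ℓ
      _ = (Δ : ℝ) ^ (ε * ℓ / 80) := by
        rw [← rpow_natCast, ← rpow_mul (by positivity)]
        ring_nf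
  have hrℓ₀ : 0 < r ^ ℓ := by positivity
  calc _ ≤ exp (1 - (r ^ ℓ)⁻¹ * (Δ : ℝ) ^ (ε * ℓ / 8)) :=
        sum_indicator_kempeCoupling_le hne (by positivity) hr hm (inv_mul_cancel₀ hrℓ₀.ne').le _
    _ ≤ exp (-(Δ : ℝ) ^ (ε * ℓ / 10)) := by
        have := rpow_add_one_le_rpow_div_pow hΔ (by linarith) hεℓ hrℓ
        rw [exp_le_exp, inv_mul_eq_div]
        linarith

end Parameters

/-- Lemma 19 of the paper: a coupling of `μ↓_{c₁,ℓ}` and `μ↓_{c₂,ℓ}`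
in which the Hamming distance at the leaves exceeds `Δ^{εℓ/8}` with probability at most
`e^{-Δ^{εℓ/10}}`. -/
theorem downward_coupling_tail (C : ℝ) (hC : 1 < C) (ε : ℝ)
    (hε : ε = min (C - 1) (1 / 3)) :
    ∃ Δ₀ ℓ₀ : ℕ, ∀ Δ : ℕ, Δ₀ < Δ → ∀ k : ℕ, C * Δ / Real.log Δ < (k : ℝ) →
      ∀ ℓ : ℕ, ℓ₀ < ℓ → ∀ c₁ c₂ : Fin k, c₁ ≠ c₂ →
        ∃ ν : ((Fin ℓ → Fin Δ) → Fin k) × ((Fin ℓ → Fin Δ) → Fin k) → ℝ,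
          IsCoupling ν (downDist Δ ℓ k c₁) (downDist Δ ℓ k c₂) ∧
          (∑ q : ((Fin ℓ → Fin Δ) → Fin k) × ((Fin ℓ → Fin Δ) → Fin k),
            Set.indicator {q : ((Fin ℓ → Fin Δ) → Fin k) × ((Fin ℓ → Fin Δ) → Fin k) |
                (Δ : ℝ) ^ (ε * (ℓ : ℝ) / 8) < (leafHamming q.1 q.2 : ℝ)} ν q) ≤
            Real.exp (-(Δ : ℝ) ^ (ε * (ℓ : ℝ) / 10)) := by
  have hε₀ : 0 < ε := hε ▸ lt_min (by linarith) (by norm_num)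
  obtain ⟨Δ₀, hΔ₀⟩ := exists_branching_le_rpow (δ := ε / 80) (by positivity)
  refine ⟨Δ₀, ⌈80 / ε⌉₊, fun Δ hΔ k hk ℓ hℓ c₁ c₂ hne =>
    ⟨kempeCoupling Δ ℓ k c₁ c₂, kempeCoupling_isCoupling, ?_⟩⟩
  have hk' : (Δ : ℝ) / Real.log Δ < k := lt_of_le_of_lt (div_le_div_of_nonneg_right
    (le_mul_of_one_le_left (Nat.cast_nonneg Δ) hC.le) (Real.log_natCast_nonneg Δ)) hk
  obtain ⟨hΔ2, hk₁, hbranch⟩ := hΔ₀ Δ hΔ k hk'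
  have hεℓ : 80 ≤ ε * ℓ := by
    have := Nat.lt_of_ceil_lt hℓ
    rw [div_lt_iff₀ hε₀] at this
    linarith
  exact sum_indicator_kempeCoupling_le_exp hne hΔ2 hk₁ hbranch hεℓ
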